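/- arXiv:1212.3920 — 2 statements merged into one kernel-verified Lean document; each statement's English description precedes it below -/
import Mathlib

section
/- Assume in addition that the function κ ↦ σ(κ)/c(κ) is strictly increasing on (0, κ_max). Then for every ρ with 0 < ρ ≤ ρ_c the compatibility equation σ(κ) = ρ c(κ) has no solution κ ∈ (0, κ_max), while for every ρ > ρ_c it has exactly one solution κ ∈ (0, κ_max). -/
/-!
Substituting `κ = h r` turns the compatibility equation into `r = ρ c(h r)` with `r > 0`.
The order parameter is the logarithmic derivative of the moment generating function of `cos θ`
under `sin θ ^ (n - 2) dθ` on `[0, π]`; at `κ = 0` this law has mean `0` and second moment `1/n`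
(a Wallis identity), so `c(κ) ∼ κ / n` as `κ → 0⁺` and `r / c(h r) → n / L = ρ_c` as `r → 0⁺`.
Since `σ / c` is strictly increasing it stays above this limit, which excludes solutions for
`ρ ≤ ρ_c` and makes them unique for `ρ > ρ_c`. Existence follows from the intermediate value
theorem: `ρ c(h r) - r` is positive for small `r` and nonpositive at `r = ρ` because `c ≤ 1`.
-/

open MeasureTheory ProbabilityTheory Real Filter Set Topology

/-- The order parameter `c(κ)` of the von Mises distribution in dimension `n`. -/
noncomputable def orderParam (n : ℕ) (κ : ℝ) : ℝ :=
  (∫ θ in (0:ℝ)..π, Real.cos θ * Real.exp (κ * Real.cos θ) * Real.sin θ ^ (n - 2)) /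
  (∫ θ in (0:ℝ)..π, Real.exp (κ * Real.cos θ) * Real.sin θ ^ (n - 2))

/-- Up to normalisation, the law of the polar angle of a uniform point of `S^(m+1)`. -/
noncomputable def sinPowMeasure (m : ℕ) : Measure ℝ :=
  (volume.restrict (Ioc 0 π)).withDensity fun θ => ((sin θ ^ m).toNNReal : ENNReal)

instance isFiniteMeasure_sinPowMeasure (m : ℕ) : IsFiniteMeasure (sinPowMeasure m) :=
  isFiniteMeasure_withDensity_ofReal (Continuous.integrableOn_Ioc (by fun_prop)).hasFiniteIntegral

lemma integral_sinPowMeasure (m : ℕ) (g : ℝ → ℝ) :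
    ∫ θ, g θ ∂sinPowMeasure m = ∫ θ in 0..π, g θ * sin θ ^ m := by
  rw [sinPowMeasure, integral_withDensity_eq_integral_smul (by fun_prop),
    intervalIntegral.integral_of_le pi_pos.le]
  refine setIntegral_congr_fun measurableSet_Ioc fun θ hθ => ?_
  rw [NNReal.smul_def, smul_eq_mul, Real.coe_toNNReal _
    (pow_nonneg (sin_nonneg_of_nonneg_of_le_pi hθ.1.le hθ.2) m), mul_comm]

lemma integrableExpSet_cos_sinPowMeasure (m : ℕ) :
    integrableExpSet cos (sinPowMeasure m) = univ := by
  refine eq_univ_of_forall fun t => ?_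
  refine Integrable.of_bound (C := exp |t|) (by fun_prop) (ae_of_all _ fun θ => ?_)
  rw [norm_of_nonneg (exp_pos _).le, exp_le_exp]
  calc t * cos θ ≤ |t * cos θ| := le_abs_self _
    _ ≤ |t| := by rw [abs_mul]; exact mul_le_of_le_one_right (abs_nonneg t) (abs_cos_le_one θ)

noncomputable def cosMoment (m k : ℕ) (κ : ℝ) : ℝ :=
  ∫ θ, cos θ ^ k * exp (κ * cos θ) ∂sinPowMeasure m

lemma cosMoment_eq_intervalIntegral (m k : ℕ) (κ : ℝ) :
    cosMoment m k κ = ∫ θ in 0..π, cos θ ^ k * exp (κ * cos θ) * sin θ ^ m :=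
  integral_sinPowMeasure m _

lemma hasDerivAt_cosMoment (m k : ℕ) (κ : ℝ) :
    HasDerivAt (cosMoment m k) (cosMoment m (k + 1) κ) κ :=
  hasDerivAt_integral_pow_mul_exp_real (by simp [integrableExpSet_cos_sinPowMeasure]) k

lemma continuous_cosMoment (m k : ℕ) : Continuous (cosMoment m k) :=
  continuous_iff_continuousAt.2 fun κ => (hasDerivAt_cosMoment m k κ).continuousAt

lemma cosMoment_zero_pos (m : ℕ) (κ : ℝ) : 0 < cosMoment m 0 κ := by
  rw [cosMoment_eq_intervalIntegral]
  refine intervalIntegral.intervalIntegral_pos_of_pos_on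
    (Continuous.intervalIntegrable (by fun_prop) _ _) (fun θ hθ => ?_) pi_pos
  have := sin_pos_of_pos_of_lt_pi hθ.1 hθ.2
  positivity

lemma cosMoment_one_le_cosMoment_zero (m : ℕ) (κ : ℝ) : cosMoment m 1 κ ≤ cosMoment m 0 κ := by
  rw [cosMoment_eq_intervalIntegral, cosMoment_eq_intervalIntegral]
  refine intervalIntegral.integral_mono_on pi_pos.le (Continuous.intervalIntegrable
    (by fun_prop) _ _) (Continuous.intervalIntegrable (by fun_prop) _ _) fun θ hθ => ?_
  refine mul_le_mul_of_nonneg_right ?_ (pow_nonneg (sin_nonneg_of_nonneg_of_le_pi hθ.1 hθ.2) m)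
  simpa using mul_le_of_le_one_left (exp_pos (κ * cos θ)).le (cos_le_one θ)

lemma cosMoment_one_zero (m : ℕ) : cosMoment m 1 0 = 0 := by
  calc cosMoment m 1 0 = ∫ θ in 0..π, sin θ ^ m * cos θ ^ (2 * 0 + 1) := by
        rw [cosMoment_eq_intervalIntegral]
        congr 1 with θ
        simp [mul_comm]
    _ = 0 := by rw [integral_sin_pow_mul_cos_pow_odd]; simp

lemma cosMoment_two_zero (m : ℕ) : cosMoment m 2 0 = cosMoment m 0 0 / (m + 2) := by
  have hrec := integral_sin_pow (a := 0) (b := π) m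
  simp only [sin_zero, sin_pi, zero_pow m.succ_ne_zero, zero_mul, sub_zero, zero_div,
    zero_add] at hrec
  have hcos_sq : (fun θ => cos θ ^ 2 * exp (0 * cos θ) * sin θ ^ m)
      = fun θ => sin θ ^ m - sin θ ^ (m + 2) :=
    funext fun θ => by rw [zero_mul, exp_zero, cos_sq']; ring
  rw [cosMoment_eq_intervalIntegral, cosMoment_eq_intervalIntegral, hcos_sq]
  simp only [pow_zero, zero_mul, exp_zero, one_mul]
  rw [intervalIntegral.integral_sub (Continuous.intervalIntegrable (by fun_prop) _ _)
    (Continuous.intervalIntegrable (by fun_prop) _ _), hrec]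
  field_simp
  ring

lemma orderParam_eq_cosMoment_div (n : ℕ) (κ : ℝ) :
    orderParam n κ = cosMoment (n - 2) 1 κ / cosMoment (n - 2) 0 κ := by
  simp only [cosMoment_eq_intervalIntegral, pow_one, pow_zero, one_mul, orderParam]

lemma continuous_orderParam (n : ℕ) : Continuous (orderParam n) := by
  simp only [funext (orderParam_eq_cosMoment_div n)]
  exact (continuous_cosMoment _ 1).div (continuous_cosMoment _ 0)
    fun κ => (cosMoment_zero_pos _ κ).ne'

lemma orderParam_le_one (n : ℕ) (κ : ℝ) : orderParam n κ ≤ 1 := by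
  rw [orderParam_eq_cosMoment_div]
  exact div_le_one_of_le₀ (cosMoment_one_le_cosMoment_zero _ κ) (cosMoment_zero_pos _ κ).le

lemma tendsto_div_self_of_hasDerivAt_zero {f : ℝ → ℝ} {a : ℝ} (hf : HasDerivAt f a 0)
    (hf0 : f 0 = 0) : Tendsto (fun x => f x / x) (𝓝[≠] 0) (𝓝 a) := by
  simpa [hf0, div_eq_inv_mul] using hasDerivAt_iff_tendsto_slope_zero.1 hf

lemma tendsto_orderParam_div_self {n : ℕ} (hn : 2 ≤ n) :
    Tendsto (fun κ => orderParam n κ / κ) (𝓝[≠] 0) (𝓝 (1 / n)) := by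
  have hslope := tendsto_div_self_of_hasDerivAt_zero (hasDerivAt_cosMoment (n - 2) 1 0)
    (cosMoment_one_zero _)
  have hlim := hslope.div (((continuous_cosMoment (n - 2) 0).tendsto 0).mono_left
    nhdsWithin_le_nhds) (cosMoment_zero_pos _ 0).ne'
  have hn' : ((n - 2 : ℕ) : ℝ) + 2 = n := by rw [Nat.cast_sub hn]; ring
  rw [cosMoment_two_zero, hn', div_right_comm, div_self (cosMoment_zero_pos _ 0).ne'] at hlim
  refine hlim.congr fun κ => ?_
  rw [Pi.div_apply, orderParam_eq_cosMoment_div, div_right_comm]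

lemma StrictMonoOn.lt_of_tendsto_nhdsGT {α β : Type*} [LinearOrder α] [TopologicalSpace α]
    [OrderTopology α] [DenselyOrdered α] [LinearOrder β] [TopologicalSpace β]
    [OrderClosedTopology β] {f : α → β} {a x : α} {l : β} (hf : StrictMonoOn f (Ioi a))
    (hl : Tendsto f (𝓝[>] a) (𝓝 l)) (hx : a < x) : l < f x := by
  obtain ⟨y, hay, hyx⟩ := exists_between hx
  have : (𝓝[>] a).NeBot := nhdsGT_neBot_of_exists_gt ⟨x, hx⟩
  refine lt_of_le_of_lt (le_of_tendsto hl ?_) (hf hay hx hyx)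
  filter_upwards [Ioo_mem_nhdsGT hay] with z hz
  exact (hf hz.1 hay hz.2).le

lemma StrictMonoOn.tendsto_nhdsGT {α β : Type*} [LinearOrder α] [TopologicalSpace α]
    [LinearOrder β] [TopologicalSpace β] {f : α → β} {a : α} (hf : StrictMonoOn f (Ici a))
    (hcont : ContinuousWithinAt f (Ici a) a) : Tendsto f (𝓝[>] a) (𝓝[>] f a) := by
  refine tendsto_nhdsWithin_of_tendsto_nhds_of_eventually_within _
    (hcont.tendsto.mono_left (nhdsWithin_mono a Ioi_subset_Ici_self)) ?_
  filter_upwards [self_mem_nhdsWithin] with x hx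
  exact hf self_mem_Ici (mem_Ici.2 (le_of_lt hx)) hx

lemma Filter.Tendsto.comp_div_self {f g : ℝ → ℝ} {a b : ℝ}
    (hf : Tendsto (fun x => f x / x) (𝓝[>] 0) (𝓝 a))
    (hg : Tendsto (fun r => g r / r) (𝓝[>] 0) (𝓝 b)) (hg0 : Tendsto g (𝓝[>] 0) (𝓝[>] 0)) :
    Tendsto (fun r => f (g r) / r) (𝓝[>] 0) (𝓝 (a * b)) := by
  refine ((hf.comp hg0).mul hg).congr' ?_
  filter_upwards [hg0 self_mem_nhdsWithin] with r hr
  rw [Function.comp_apply, div_mul_div_cancel₀ (ne_of_gt hr)]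

lemma exists_pos_eq_of_tendsto_div_of_le {φ : ℝ → ℝ} {ℓ B : ℝ} (hφ : ContinuousOn φ (Ioi 0))
    (hlim : Tendsto (fun r => φ r / r) (𝓝[>] 0) (𝓝 ℓ)) (hℓ : 1 < ℓ)
    (hB : ∀ r, 0 < r → φ r ≤ B) : ∃ r, 0 < r ∧ φ r = r := by
  obtain ⟨r₁, hr₁, hφr₁⟩ : ∃ r₁, 0 < r₁ ∧ 1 < φ r₁ / r₁ :=
    (eventually_mem_nhdsWithin.and (hlim.eventually (lt_mem_nhds hℓ))).exists
  rw [one_lt_div hr₁] at hφr₁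
  have hr₁B : r₁ ≤ B := (hφr₁.trans_le (hB r₁ hr₁)).le
  have hψ : ContinuousOn (fun r => φ r - r) (Icc r₁ B) :=
    (hφ.mono fun r hr => hr₁.trans_le hr.1).sub continuousOn_id
  obtain ⟨r, hr, hψr⟩ := intermediate_value_Icc' hr₁B hψ
    ⟨sub_nonpos.2 (hB B (hr₁.trans_le hr₁B)), sub_nonneg.2 hφr₁.le⟩
  exact ⟨r, hr₁.trans_le hr.1, sub_eq_zero.1 hψr⟩

lemma eq_mul_iff_div_eq_of_ne_zero {K : Type*} [Field K] {a b ρ : K} (ha : a ≠ 0)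
    (hρ : ρ ≠ 0) : a = ρ * b ↔ a / b = ρ := by
  rcases eq_or_ne b 0 with rfl | hb
  · simp [ha, hρ.symm]
  · rw [div_eq_iff hb, mul_comm]

lemma image_Ioi_eq_of_strictMonoOn {h : ℝ → ℝ} {κmax : EReal} (hmono : StrictMonoOn h (Ici 0))
    (h0 : h 0 = 0) (hrange : ∀ r : ℝ, 0 ≤ r → 0 ≤ h r ∧ (h r : EReal) < κmax)
    (hsurj : ∀ κ : ℝ, 0 ≤ κ → (κ : EReal) < κmax → ∃ r, 0 ≤ r ∧ h r = κ) :
    h '' Ioi 0 = {κ : ℝ | 0 < κ ∧ (κ : EReal) < κmax} := by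
  ext κ
  constructor
  · rintro ⟨r, hr, rfl⟩
    exact ⟨h0 ▸ hmono self_mem_Ici (mem_Ici.2 (le_of_lt hr)) hr, (hrange r (le_of_lt hr)).2⟩
  · rintro ⟨hκ, hκmax⟩
    obtain ⟨r, hr, rfl⟩ := hsurj κ hκ.le hκmax
    exact ⟨r, hr.lt_of_ne (by rintro rfl; exact hκ.ne' h0), rfl⟩

lemma tendsto_orderParam_comp_div_self {n : ℕ} (hn : 2 ≤ n) {h : ℝ → ℝ} {L : ℝ}
    (hcont : ContinuousOn h (Ici 0)) (hmono : StrictMonoOn h (Ici 0)) (h0 : h 0 = 0)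
    (hL : Tendsto (fun r => h r / r) (𝓝[>] 0) (𝓝 L)) :
    Tendsto (fun r => orderParam n (h r) / r) (𝓝[>] 0) (𝓝 (L / n)) := by
  have hh0 := hmono.tendsto_nhdsGT (hcont 0 self_mem_Ici)
  rw [h0] at hh0
  have := ((tendsto_orderParam_div_self hn).mono_left
    (nhdsWithin_mono _ fun x hx => ne_of_gt hx)).comp_div_self hL hh0
  rwa [one_div_mul_eq_div] at this

lemma lt_div_comp_of_tendsto {c h σ : ℝ → ℝ} {ρc : ℝ} (hρc : 0 < ρc)
    (hmono : StrictMonoOn h (Ioi 0)) (hσ : ∀ r > 0, σ (h r) = r)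
    (hinc : StrictMonoOn (fun κ => σ κ / c κ) (h '' Ioi 0))
    (hlim : Tendsto (fun r => c (h r) / r) (𝓝[>] 0) (𝓝 (1 / ρc))) {r : ℝ} (hr : 0 < r) :
    ρc < σ (h r) / c (h r) := by
  have hlim' := hlim.inv₀ (by positivity)
  rw [one_div, inv_inv] at hlim'
  refine (hinc.comp hmono (mapsTo_image h _)).lt_of_tendsto_nhdsGT (hlim'.congr' ?_) hr
  filter_upwards [self_mem_nhdsWithin] with r hr
  rw [Function.comp_apply, inv_div, hσ r hr]

theorem compatibility_dichotomy_general (n : ℕ) (hn : 2 ≤ n)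
    (h σ : ℝ → ℝ) (κmax : EReal)
    (hcont : ContinuousOn h (Set.Ici 0)) (hmono : StrictMonoOn h (Set.Ici 0))
    (h0 : h 0 = 0)
    (hrange : ∀ r : ℝ, 0 ≤ r → 0 ≤ h r ∧ (h r : EReal) < κmax)
    (hsurj : ∀ κ : ℝ, 0 ≤ κ → (κ : EReal) < κmax → ∃ r, 0 ≤ r ∧ h r = κ)
    (hσ : ∀ r : ℝ, 0 ≤ r → σ (h r) = r)
    (L : ℝ) (hLpos : 0 < L)
    (hL : Tendsto (fun r : ℝ => h r / r) (nhdsWithin 0 (Set.Ioi 0)) (nhds L))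
    (ρc : ℝ) (hρc : ρc = n / L)
    (hinc : StrictMonoOn (fun κ : ℝ => σ κ / orderParam n κ)
      {κ : ℝ | 0 < κ ∧ (κ : EReal) < κmax}) :
    (∀ ρ : ℝ, 0 < ρ → ρ ≤ ρc →
      ¬ ∃ κ : ℝ, 0 < κ ∧ (κ : EReal) < κmax ∧ σ κ = ρ * orderParam n κ) ∧
    (∀ ρ : ℝ, ρc < ρ →
      ∃! κ : ℝ, 0 < κ ∧ (κ : EReal) < κmax ∧ σ κ = ρ * orderParam n κ) := by
  have hS := image_Ioi_eq_of_strictMonoOn hmono h0 hrange hsurj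
  have hmem : ∀ κ : ℝ, (0 < κ ∧ (κ : EReal) < κmax) ↔ κ ∈ h '' Ioi 0 := fun κ => by
    rw [hS]; rfl
  rw [← hS] at hinc
  simp only [← and_assoc, hmem]
  have hρc_pos : 0 < ρc := hρc ▸ div_pos (by exact_mod_cast (by omega : 0 < n)) hLpos
  have hkey := tendsto_orderParam_comp_div_self hn hcont hmono h0 hL
  rw [← one_div_div, ← hρc] at hkey
  have hσ' : ∀ r > 0, σ (h r) = r := fun r hr => hσ r hr.le
  have hsol : ∀ ρ ≠ 0, ∀ r > 0, σ (h r) = ρ * orderParam n (h r) ↔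
      σ (h r) / orderParam n (h r) = ρ := fun ρ hρ r hr =>
    eq_mul_iff_div_eq_of_ne_zero (by rw [hσ' r hr]; exact hr.ne') hρ
  refine ⟨fun ρ hρ hle ⟨κ, ⟨r, hr, hrκ⟩, heq⟩ => ?_, fun ρ hρ => ?_⟩
  · subst hrκ
    linarith [(hsol ρ hρ.ne' r hr).1 heq,
      lt_div_comp_of_tendsto hρc_pos (hmono.mono Ioi_subset_Ici_self) hσ' hinc hkey hr]
  have hρ_pos := hρc_pos.trans hρ
  obtain ⟨r, hr, hfix⟩ := exists_pos_eq_of_tendsto_div_of_le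
    (φ := fun r => ρ * orderParam n (h r)) (B := ρ)
    (continuousOn_const.mul ((continuous_orderParam n).comp_continuousOn
      (hcont.mono Ioi_subset_Ici_self)))
    (by simpa only [mul_div_assoc] using hkey.const_mul ρ)
    (by rwa [mul_one_div, one_lt_div hρc_pos])
    fun r _ => mul_le_of_le_one_right hρ_pos.le (orderParam_le_one n _)
  have hr_sol : σ (h r) = ρ * orderParam n (h r) := by rw [hσ' r hr]; exact hfix.symm
  refine ⟨h r, ⟨mem_image_of_mem h hr, hr_sol⟩, fun κ ⟨⟨r', hr', hr'κ⟩, heq⟩ => ?_⟩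
  subst hr'κ
  exact hinc.injOn (mem_image_of_mem h hr') (mem_image_of_mem h hr)
    (((hsol ρ hρ_pos.ne' r' hr').1 heq).trans ((hsol ρ hρ_pos.ne' r hr).1 hr_sol).symm)

/-- If `κ ↦ σ(κ)/c(κ)` is strictly increasing on `(0, κmax)`, then for `0 < ρ ≤ ρ_c`
the compatibility equation `σ(κ) = ρ c(κ)` has no solution in `(0, κmax)`, while for
`ρ > ρ_c` it has exactly one. -/
theorem compatibility_dichotomy (n : ℕ) (hn : 2 ≤ n)
    (h σ : ℝ → ℝ) (κmax : EReal) (hκmax : 0 < κmax)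
    (hcont : ContinuousOn h (Set.Ici 0)) (hmono : StrictMonoOn h (Set.Ici 0))
    (h0 : h 0 = 0)
    (hrange : ∀ r : ℝ, 0 ≤ r → 0 ≤ h r ∧ (h r : EReal) < κmax)
    (hsurj : ∀ κ : ℝ, 0 ≤ κ → (κ : EReal) < κmax → ∃ r, 0 ≤ r ∧ h r = κ)
    (hσ : ∀ r : ℝ, 0 ≤ r → σ (h r) = r)
    (L : ℝ) (hLpos : 0 < L)
    (hL : Tendsto (fun r : ℝ => h r / r) (nhdsWithin 0 (Set.Ioi 0)) (nhds L))
    (ρc : ℝ) (hρc : ρc = n / L)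
    (hinc : StrictMonoOn (fun κ : ℝ => σ κ / orderParam n κ)
      {κ : ℝ | 0 < κ ∧ (κ : EReal) < κmax}) :
    (∀ ρ : ℝ, 0 < ρ → ρ ≤ ρc →
      ¬ ∃ κ : ℝ, 0 < κ ∧ (κ : EReal) < κmax ∧ σ κ = ρ * orderParam n κ) ∧
    (∀ ρ : ℝ, ρc < ρ →
      ∃! κ : ℝ, 0 < κ ∧ (κ : EReal) < κmax ∧ σ κ = ρ * orderParam n κ) :=
  compatibility_dichotomy_general n hn h σ κmax hcont hmono h0 hrange hsurj hσ L hLpos hL ρc hρc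
    hinc
end

section
/- With σ₀(κ) = (√(1+4κ) − 1)/2, one has the small-κ expansion c(κ)/σ₀(κ) = 1/n + κ/n + O(κ²); precisely, (c(κ)/σ₀(κ) − 1/n)/κ → 1/n as κ → 0⁺. -/
open MeasureTheory Real Filter

/-- The inverse `σ₀` of `h(r) = r + r²`, arising from `ν(|J|) = |J|`, `τ(|J|) = 1/(1+|J|)`. -/
noncomputable def σ₀ (κ : ℝ) : ℝ := (Real.sqrt (1 + 4 * κ) - 1) / 2

/-!
Expanding `e^{κ cos θ}` to second order, and using that odd powers of `cos θ` integrate to zero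
against `sin^{n-2} θ` over `[0, π]` (reflect `θ ↦ π - θ`) while `∫ cos² θ sin^{n-2} θ = M / n` with
`M = ∫ sin^{n-2} θ`, gives `c(κ) = κ / n + O(κ³)`. Since `σ₀(κ) = κ - κ² + O(κ³)`, the quotient is
`c(κ) / σ₀(κ) = (1 + κ + O(κ²)) / n`.
-/

open Topology Asymptotics

theorem integral_zero_pi_eq_zero_of_antisymm {f : ℝ → ℝ} (hf : ∀ θ, f (π - θ) = -f θ) :
    ∫ θ in (0:ℝ)..π, f θ = 0 := by
  have h := intervalIntegral.integral_comp_sub_left (a := 0) (b := π) f π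
  simp only [hf, intervalIntegral.integral_neg, sub_self, sub_zero] at h
  linarith

theorem integral_cos_pow_odd_mul_sin_pow (j k : ℕ) :
    ∫ θ in (0:ℝ)..π, cos θ ^ (2 * j + 1) * sin θ ^ k = 0 :=
  integral_zero_pi_eq_zero_of_antisymm fun θ => by
    rw [cos_pi_sub, sin_pi_sub, Odd.neg_pow ⟨j, rfl⟩, neg_mul]

theorem integral_cos_sq_mul_sin_pow (k : ℕ) :
    ∫ θ in (0:ℝ)..π, cos θ ^ 2 * sin θ ^ k = (∫ θ in (0:ℝ)..π, sin θ ^ k) / (k + 2) := by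
  have hpyth : ∀ θ, cos θ ^ 2 * sin θ ^ k = sin θ ^ k - sin θ ^ (k + 2) := fun θ => by
    rw [cos_sq', pow_add]; ring
  simp_rw [hpyth]
  rw [intervalIntegral.integral_sub (Continuous.intervalIntegrable (by fun_prop) _ _)
    (Continuous.intervalIntegrable (by fun_prop) _ _), integral_sin_pow]
  simp only [sin_zero, sin_pi]
  field_simp
  ring

theorem abs_exp_sub_one_sub_id_sub_sq_div_two_le {x : ℝ} (hx : |x| ≤ 1) :
    |exp x - 1 - x - x ^ 2 / 2| ≤ |x| ^ 3 := by
  have h := exp_bound hx (n := 3) (by norm_num)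
  norm_num [Finset.sum_range_succ, Nat.factorial] at h
  calc |exp x - 1 - x - x ^ 2 / 2| = |exp x - (1 + x + x ^ 2 / 2)| := by ring_nf
    _ ≤ |x| ^ 3 * (2 / 9) := h
    _ ≤ |x| ^ 3 := by nlinarith [pow_nonneg (abs_nonneg x) 3]

theorem abs_integral_zero_pi_le {f : ℝ → ℝ} {C : ℝ} (h : ∀ θ, |f θ| ≤ C) :
    |∫ θ in (0:ℝ)..π, f θ| ≤ C * π := by
  simpa [abs_of_pos pi_pos] using
    intervalIntegral.norm_integral_le_of_norm_le_const (a := 0) (b := π) (f := f)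
      fun θ _ => (Real.norm_eq_abs (f θ)).trans_le (h θ)

theorem abs_mul_cos_le_one {κ : ℝ} (hκ : |κ| ≤ 1) (θ : ℝ) : |κ * cos θ| ≤ 1 := by
  rw [abs_mul]
  exact mul_le_one₀ hκ (abs_nonneg _) (abs_cos_le_one θ)

noncomputable def partitionIntegral (k : ℕ) (κ : ℝ) : ℝ :=
  ∫ θ in (0:ℝ)..π, exp (κ * cos θ) * sin θ ^ k

noncomputable def momentIntegral (k : ℕ) (κ : ℝ) : ℝ :=
  ∫ θ in (0:ℝ)..π, cos θ * exp (κ * cos θ) * sin θ ^ k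

theorem orderParam_add_two (k : ℕ) (κ : ℝ) :
    orderParam (k + 2) κ = momentIntegral k κ / partitionIntegral k κ := by
  simp only [orderParam, Nat.add_sub_cancel, momentIntegral, partitionIntegral]

theorem partitionIntegral_pos (k : ℕ) (κ : ℝ) : 0 < partitionIntegral k κ :=
  intervalIntegral.intervalIntegral_pos_of_pos_on (Continuous.intervalIntegrable (by fun_prop) _ _)
    (fun θ hθ => mul_pos (exp_pos _) (pow_pos (sin_pos_of_pos_of_lt_pi hθ.1 hθ.2) k)) pi_pos

theorem abs_partitionIntegral_sub_le (k : ℕ) {κ : ℝ} (hκ : |κ| ≤ 1) :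
    |partitionIntegral k κ - ∫ θ in (0:ℝ)..π, sin θ ^ k| ≤ κ ^ 2 * π := by
  have hodd : ∫ θ in (0:ℝ)..π, cos θ * sin θ ^ k = 0 := by
    simpa using integral_cos_pow_odd_mul_sin_pow 0 k
  have hrem : partitionIntegral k κ - ∫ θ in (0:ℝ)..π, sin θ ^ k
      = ∫ θ in (0:ℝ)..π, (exp (κ * cos θ) - 1 - κ * cos θ) * sin θ ^ k := by
    simp_rw [sub_mul, one_mul, mul_assoc]
    rw [intervalIntegral.integral_sub, intervalIntegral.integral_sub,
      intervalIntegral.integral_const_mul, hodd, mul_zero, sub_zero, partitionIntegral]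
    all_goals exact Continuous.intervalIntegrable (by fun_prop) _ _
  rw [hrem]
  refine abs_integral_zero_pi_le fun θ => ?_
  have hx := abs_mul_cos_le_one hκ θ
  rw [abs_mul, abs_pow]
  calc |exp (κ * cos θ) - 1 - κ * cos θ| * |sin θ| ^ k ≤ (κ * cos θ) ^ 2 * 1 :=
        mul_le_mul (abs_exp_sub_one_sub_id_le hx) (pow_le_one₀ (abs_nonneg _) (abs_sin_le_one θ))
          (by positivity) (by positivity)
    _ ≤ κ ^ 2 := by rw [mul_one, mul_pow]; nlinarith [cos_sq_le_one θ, sq_nonneg κ]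

theorem abs_momentIntegral_sub_le (k : ℕ) {κ : ℝ} (hκ : |κ| ≤ 1) :
    |momentIntegral k κ - κ * (∫ θ in (0:ℝ)..π, sin θ ^ k) / (k + 2)| ≤ |κ| ^ 3 * π := by
  have hodd₁ : ∫ θ in (0:ℝ)..π, cos θ * sin θ ^ k = 0 := by
    simpa using integral_cos_pow_odd_mul_sin_pow 0 k
  have hodd₃ : ∫ θ in (0:ℝ)..π, cos θ ^ 3 * sin θ ^ k = 0 :=
    integral_cos_pow_odd_mul_sin_pow 1 k
  have hrem : momentIntegral k κ - κ * (∫ θ in (0:ℝ)..π, sin θ ^ k) / (k + 2)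
      = ∫ θ in (0:ℝ)..π,
          cos θ * (exp (κ * cos θ) - 1 - κ * cos θ - (κ * cos θ) ^ 2 / 2) * sin θ ^ k := by
    have hexpand : ∀ θ, cos θ * (exp (κ * cos θ) - 1 - κ * cos θ - (κ * cos θ) ^ 2 / 2) * sin θ ^ k
        = cos θ * exp (κ * cos θ) * sin θ ^ k - cos θ * sin θ ^ k
          - κ * (cos θ ^ 2 * sin θ ^ k) - κ ^ 2 / 2 * (cos θ ^ 3 * sin θ ^ k) := fun θ => by ring
    simp_rw [hexpand]
    rw [intervalIntegral.integral_sub, intervalIntegral.integral_sub, intervalIntegral.integral_sub,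
      intervalIntegral.integral_const_mul, intervalIntegral.integral_const_mul, hodd₁, hodd₃,
      integral_cos_sq_mul_sin_pow, momentIntegral]
    · ring
    all_goals exact Continuous.intervalIntegrable (by fun_prop) _ _
  rw [hrem]
  refine abs_integral_zero_pi_le fun θ => ?_
  have hx := abs_mul_cos_le_one hκ θ
  rw [abs_mul, abs_mul, abs_pow]
  calc |cos θ| * |exp (κ * cos θ) - 1 - κ * cos θ - (κ * cos θ) ^ 2 / 2| * |sin θ| ^ k
      ≤ 1 * |κ * cos θ| ^ 3 * 1 :=
        mul_le_mul (mul_le_mul (abs_cos_le_one θ) (abs_exp_sub_one_sub_id_sub_sq_div_two_le hx)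
          (abs_nonneg _) zero_le_one) (pow_le_one₀ (abs_nonneg _) (abs_sin_le_one θ))
          (by positivity) (by positivity)
    _ ≤ |κ| ^ 3 := by
        rw [one_mul, mul_one, abs_mul, mul_pow]
        exact mul_le_of_le_one_right (by positivity)
          (pow_le_one₀ (abs_nonneg _) (abs_cos_le_one θ))

theorem tendsto_orderParam_sub_div_sq {n : ℕ} (hn : 2 ≤ n) :
    Tendsto (fun κ => (orderParam n κ - κ / n) / κ ^ 2) (𝓝[≠] 0) (𝓝 0) := by
  obtain ⟨k, rfl⟩ := Nat.exists_eq_add_of_le' hn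
  set M := ∫ θ in (0:ℝ)..π, sin θ ^ k
  have hsmall : ∀ᶠ κ in 𝓝 (0:ℝ), |κ| ≤ 1 := by
    filter_upwards [Metric.closedBall_mem_nhds (0:ℝ) one_pos] with κ hκ
    simpa using hκ
  have hZ : (fun κ => partitionIntegral k κ - M) =O[𝓝 0] fun κ => κ * κ := by
    refine IsBigO.of_bound π (hsmall.mono fun κ hκ => ?_)
    simpa [mul_comm π, sq] using abs_partitionIntegral_sub_le k hκ
  have hF : (fun κ => momentIntegral k κ - κ * M / (k + 2)) =O[𝓝 0] fun κ => κ * (κ * κ) := by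
    refine IsBigO.of_bound π (hsmall.mono fun κ hκ => ?_)
    simpa [mul_comm π, pow_three] using abs_momentIntegral_sub_le k hκ
  have hE : (fun κ => momentIntegral k κ - κ * partitionIntegral k κ / (k + 2))
      =O[𝓝 0] fun κ => κ ^ 3 := by
    refine (hF.sub (((isBigO_refl (fun κ : ℝ => κ) _).mul hZ).const_mul_left
      (k + 2 : ℝ)⁻¹)).congr (fun κ => by ring) (fun κ => by ring)
  have hZ_lim : Tendsto (partitionIntegral k) (𝓝 0) (𝓝 M) :=
    tendsto_sub_nhds_zero_iff.mp <|
      hZ.trans_tendsto (Continuous.tendsto' (by fun_prop) 0 0 (mul_zero 0))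
  have hlim := ((hE.trans_isLittleO (isLittleO_pow_pow (by norm_num : 2 < 3))
    ).tendsto_div_nhds_zero.div hZ_lim (integral_sin_pow_pos (n := k)).ne').mono_left
    (nhdsWithin_le_nhds (s := {0}ᶜ))
  rw [zero_div] at hlim
  refine hlim.congr fun κ => ?_
  have hZ_ne := (partitionIntegral_pos k κ).ne'
  rw [Pi.div_apply, orderParam_add_two]
  push_cast
  field_simp

theorem sigma0_sub_self {κ : ℝ} (hκ : -(1 / 4) ≤ κ) :
    σ₀ κ - κ = -2 * κ ^ 2 / (√(1 + 4 * κ) + 1 + 2 * κ) := by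
  have hsq : √(1 + 4 * κ) ^ 2 = 1 + 4 * κ := sq_sqrt (by linarith)
  have hden : 0 < √(1 + 4 * κ) + 1 + 2 * κ := by linarith [sqrt_nonneg (1 + 4 * κ)]
  rw [eq_div_iff hden.ne', σ₀]
  linear_combination hsq / 2

theorem tendsto_sigma0_sub_div_sq :
    Tendsto (fun κ => (σ₀ κ - κ) / κ ^ 2) (𝓝[≠] 0) (𝓝 (-1)) := by
  have hcont : Tendsto (fun κ : ℝ => -2 / (√(1 + 4 * κ) + 1 + 2 * κ)) (𝓝 0) (𝓝 (-1)) := by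
    have h : ContinuousAt (fun κ : ℝ => -2 / (√(1 + 4 * κ) + 1 + 2 * κ)) 0 :=
      ContinuousAt.div (by fun_prop) (by fun_prop) (by norm_num)
    convert h.tendsto using 2
    norm_num
  refine (hcont.mono_left nhdsWithin_le_nhds).congr' ?_
  filter_upwards [self_mem_nhdsWithin,
    nhdsWithin_le_nhds (Ici_mem_nhds (by norm_num : -(1 / 4 : ℝ) < 0))] with κ hκ0 hκ
  rw [sigma0_sub_self hκ, mul_div_right_comm, mul_div_cancel_right₀ _ (pow_ne_zero 2 hκ0)]

theorem tendsto_div_sub_div_of_tendsto_sub_div_sq {l : Filter ℝ} (hl : l ≤ 𝓝[≠] 0)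
    {f g : ℝ → ℝ} {a p q : ℝ}
    (hf : Tendsto (fun x => (f x - a * x) / x ^ 2) l (𝓝 p))
    (hg : Tendsto (fun x => (g x - x) / x ^ 2) l (𝓝 q)) :
    Tendsto (fun x => (f x / g x - a) / x) l (𝓝 (p - a * q)) := by
  have hx : Tendsto id l (𝓝 0) := tendsto_id.mono_left (hl.trans nhdsWithin_le_nhds)
  have hdenom : Tendsto (fun x => 1 + x * ((g x - x) / x ^ 2)) l (𝓝 1) := by
    simpa using (hx.mul hg).const_add 1
  -- with `u`, `v` the quotients in `hf`, `hg`: `(f / g - a) / x = (u - a * v) / (1 + x * v)`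
  have hlim := (hf.sub (hg.const_mul a)).div hdenom one_ne_zero
  rw [div_one] at hlim
  refine hlim.congr' ?_
  filter_upwards [hl self_mem_nhdsWithin, hdenom.eventually_ne one_ne_zero] with x (hx0 : x ≠ 0) hgx
  have hden : 1 + x * ((g x - x) / x ^ 2) = g x / x := by field_simp; ring
  have hg0 : g x ≠ 0 := (div_ne_zero_iff.mp (hden ▸ hgx)).1
  rw [Pi.div_apply, hden]
  field_simp
  ring

/-- Small-`κ` expansion: `c(κ)/σ₀(κ) = 1/n + κ/n + O(κ²)`, in the precise form
`(c(κ)/σ₀(κ) - 1/n)/κ → 1/n` as `κ → 0⁺`. -/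
theorem orderParam_div_sigma0_small_kappa (n : ℕ) (hn : 2 ≤ n) :
    Tendsto (fun κ : ℝ => (orderParam n κ / σ₀ κ - 1 / n) / κ)
      (nhdsWithin 0 (Set.Ioi 0)) (nhds (1 / n)) := by
  have hl : 𝓝[>] (0:ℝ) ≤ 𝓝[≠] 0 := nhdsWithin_mono 0 fun _ hκ => ne_of_gt hκ
  have hc : Tendsto (fun κ => (orderParam n κ - 1 / n * κ) / κ ^ 2) (𝓝[≠] 0) (𝓝 0) :=
    (tendsto_orderParam_sub_div_sq hn).congr fun κ => by ring
  convert tendsto_div_sub_div_of_tendsto_sub_div_sq hl (hc.mono_left hl)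
    (tendsto_sigma0_sub_div_sq.mono_left hl) using 2
  ring
end
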